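/- Let f : ℤ × ℤ → ℂ satisfy f(u,v) = -f(v,u) for all u, v. Let S, N ≥ 1 and let {x_1 < ... < x_N} and {y_1 < ... < y_S} be complementary subsets of {0, 1, ..., S+N-1}. Then ∏_{1≤i<j≤S} f(y_i, y_j) = ± ∏_{1≤i<j≤N} f(x_i, x_j) · ∏_{0≤u<v≤S+N-1} f(u,v) · ∏_{1≤i≤N} [∏_{0≤u<x_i} f(x_i, u) · ∏_{x_i<u≤S+N-1} f(u, x_i)]^{-1}, provided all factors in the denominators are nonzero, where the sign ± depends only on S, N and the positions x_i. -/
import Mathlib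

open Finset

private lemma flipA (f : ℤ × ℤ → ℂ) (hanti : ∀ u v, f (u,v) = -f (v,u)) (a : ℤ) (s : Finset ℤ) :
    ∏ u ∈ s, f (a, u) = (-1)^s.card * ∏ u ∈ s, f (u, a) := by
  rw [← Finset.prod_const, ← Finset.prod_mul_distrib]
  exact Finset.prod_congr rfl fun u _ => by rw [hanti]; ring

private lemma flipB (f : ℤ × ℤ → ℂ) (hanti : ∀ u v, f (u,v) = -f (v,u)) (a : ℤ) (s : Finset ℤ) :
    ∏ u ∈ s, f (u, a) = (-1)^s.card * ∏ u ∈ s, f (a, u) := by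
  rw [← Finset.prod_const, ← Finset.prod_mul_distrib]
  exact Finset.prod_congr rfl fun u _ => by rw [hanti]; ring

private lemma swapP (s t : Finset ℤ) (g : ℤ → ℤ → ℂ) :
    ∏ u ∈ s, ∏ v ∈ t with u < v, g u v = ∏ v ∈ t, ∏ u ∈ s with u < v, g u v := by
  simp_rw [Finset.prod_filter]; exact Finset.prod_comm

private lemma indexedP {n} (z : Fin n → ℤ) (hz : StrictMono z) (g : ℤ → ℤ → ℂ) :
    ∏ i : Fin n, ∏ j ∈ Finset.univ.filter (fun j => i < j), g (z i) (z j)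
      = ∏ u ∈ Finset.image z Finset.univ,
          ∏ v ∈ (Finset.image z Finset.univ).filter (fun v => u < v), g u v := by
  rw [Finset.prod_image (fun a _ b _ h => hz.injective h)]
  refine Finset.prod_congr rfl fun i _ => ?_
  have h1 : (Finset.image z Finset.univ).filter (fun v => z i < v)
      = Finset.image z (Finset.univ.filter fun j => i < j) := by
    ext v
    simp only [Finset.mem_filter, Finset.mem_image, Finset.mem_univ, true_and]
    constructor
    · rintro ⟨⟨j, rfl⟩, h⟩; exact ⟨j, hz.lt_iff_lt.mp h, rfl⟩
    · rintro ⟨j, hj, rfl⟩; exact ⟨⟨j, rfl⟩, hz.lt_iff_lt.mpr hj⟩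
  rw [h1, Finset.prod_image (fun a _ b _ h => hz.injective h)]

/-- Particle-hole involution identity for antisymmetric bivariate functions. -/
theorem particle_hole_involution (f : ℤ × ℤ → ℂ)
    (hanti : ∀ u v : ℤ, f (u, v) = -f (v, u))
    (S N : ℕ) (hS : 1 ≤ S) (hN : 1 ≤ N)
    (x : Fin N → ℤ) (y : Fin S → ℤ)
    (hx : StrictMono x) (hy : StrictMono y)
    (hdisj : Set.range x ∩ Set.range y = ∅)
    (hcover : Set.range x ∪ Set.range y = {u : ℤ | 0 ≤ u ∧ u < S + N})
    (hden : ∀ (i : Fin N) (u : ℤ),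
      (0 ≤ u ∧ u < x i → f (x i, u) ≠ 0) ∧ (x i < u ∧ u < S + N → f (u, x i) ≠ 0)) :
    ∃ ε : ℂ, (ε = 1 ∨ ε = -1) ∧
      (∏ i : Fin S, ∏ j ∈ Finset.univ.filter (fun j => i < j), f (y i, y j)) =
        ε * (∏ i : Fin N, ∏ j ∈ Finset.univ.filter (fun j => i < j), f (x i, x j)) *
          (∏ u ∈ Finset.range (S + N), ∏ v ∈ Finset.range (S + N) with u < v,
            f ((u : ℤ), (v : ℤ))) *
          (∏ i : Fin N,
            (∏ u ∈ Finset.Ico (0 : ℤ) (x i), f (x i, u)) *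
              (∏ u ∈ Finset.Ioc (x i) ((S : ℤ) + N - 1), f (u, x i)))⁻¹ := by
  classical
  set X : Finset ℤ := Finset.image x Finset.univ with hXdef
  set Y : Finset ℤ := Finset.image y Finset.univ with hYdef
  set T : Finset ℤ := Finset.Ico (0 : ℤ) ((S : ℤ) + N) with hTdef
  have hXco : (X : Set ℤ) = Set.range x := by
    rw [hXdef, Finset.coe_image, Finset.coe_univ, Set.image_univ]
  have hYco : (Y : Set ℤ) = Set.range y := by
    rw [hYdef, Finset.coe_image, Finset.coe_univ, Set.image_univ]
  have hU : X ∪ Y = T := by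
    apply Finset.coe_injective
    rw [Finset.coe_union, hXco, hYco, hcover, hTdef, Finset.coe_Ico]
    ext u; simp [Set.mem_Ico]
  have hXY : Disjoint X Y := by
    rw [← Finset.disjoint_coe, hXco, hYco, Set.disjoint_iff_inter_eq_empty]
    exact hdisj
  -- the four base products
  set PXX : ℂ := ∏ u ∈ X, ∏ v ∈ X with u < v, f (u, v) with hPXX
  set PXY : ℂ := ∏ u ∈ X, ∏ v ∈ Y with u < v, f (u, v) with hPXY
  set PYX : ℂ := ∏ u ∈ Y, ∏ v ∈ X with u < v, f (u, v) with hPYX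
  set PYY : ℂ := ∏ u ∈ Y, ∏ v ∈ Y with u < v, f (u, v) with hPYY
  set D : ℂ := ∏ i : Fin N,
      (∏ u ∈ Finset.Ico (0 : ℤ) (x i), f (x i, u)) *
        (∏ u ∈ Finset.Ioc (x i) ((S : ℤ) + N - 1), f (u, x i)) with hDdef
  -- full product splits
  have hsplit : (∏ u ∈ T, ∏ v ∈ T with u < v, f (u, v)) = PXX * PXY * PYX * PYY := by
    rw [← hU, Finset.prod_union hXY]
    have inner : ∀ u : ℤ, (∏ v ∈ (X ∪ Y) with u < v, f (u, v))
        = (∏ v ∈ X with u < v, f (u, v)) * ∏ v ∈ Y with u < v, f (u, v) := by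
      intro u
      rw [Finset.filter_union, Finset.prod_union (Finset.disjoint_filter_filter hXY)]
    simp_rw [inner]
    rw [Finset.prod_mul_distrib, Finset.prod_mul_distrib]
    rw [hPXX, hPXY, hPYX, hPYY]; ring
  -- statement's full product equals the T-product
  have hfull : (∏ u ∈ Finset.range (S + N), ∏ v ∈ Finset.range (S + N) with u < v,
      f ((u : ℤ), (v : ℤ))) = ∏ u ∈ T, ∏ v ∈ T with u < v, f (u, v) := by
    have castinj : ∀ a ∈ Finset.range (S + N), ∀ b ∈ Finset.range (S + N),
        (a : ℤ) = (b : ℤ) → a = b := fun a _ b _ h => by exact_mod_cast h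
    have hT : T = Finset.image (Nat.cast : ℕ → ℤ) (Finset.range (S + N)) := by
      ext u
      simp only [hTdef, Finset.mem_Ico, Finset.mem_image, Finset.mem_range]
      constructor
      · rintro ⟨h0, h1⟩; exact ⟨u.toNat, by omega, by omega⟩
      · rintro ⟨n, hn, rfl⟩; omega
    rw [hT, Finset.prod_image castinj]
    refine Finset.prod_congr rfl fun u hu => ?_
    have hfil : (Finset.image (Nat.cast : ℕ → ℤ) (Finset.range (S + N))).filter
        (fun v => (u : ℤ) < v) = Finset.image (Nat.cast : ℕ → ℤ)
          ((Finset.range (S + N)).filter (fun v => u < v)) := by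
      ext v
      simp only [Finset.mem_filter, Finset.mem_image, Finset.mem_range]
      constructor
      · rintro ⟨⟨n, hn, rfl⟩, h⟩; exact ⟨n, ⟨hn, by exact_mod_cast h⟩, rfl⟩
      · rintro ⟨n, ⟨hn, h⟩, rfl⟩; exact ⟨⟨n, hn, rfl⟩, by exact_mod_cast h⟩
    rw [hfil, Finset.prod_image (fun a _ b _ h => by exact_mod_cast h)]
  -- D in terms of base products
  have hb : ∀ i : Fin N, 0 ≤ x i ∧ x i < (S : ℤ) + N := by
    intro i
    have hm : x i ∈ T := by
      rw [← hU]
      exact Finset.mem_union_left _ (Finset.mem_image_of_mem x (Finset.mem_univ i))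
    rw [hTdef, Finset.mem_Ico] at hm
    exact hm
  have hD : ∃ K : ℕ, D = (-1 : ℂ)^K * (PXX * PXX * PXY * PYX) := by
    have hIco : ∀ i : Fin N, Finset.Ico (0 : ℤ) (x i) = T.filter (fun u => u < x i) := by
      intro i
      have := hb i
      ext u
      simp only [hTdef, Finset.mem_filter, Finset.mem_Ico]
      omega
    have hIoc : ∀ i : Fin N, Finset.Ioc (x i) ((S : ℤ) + N - 1)
        = T.filter (fun u => x i < u) := by
      intro i
      have := hb i
      ext u
      simp only [hTdef, Finset.mem_filter, Finset.mem_Ico, Finset.mem_Ioc]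
      omega
    have hfil : ∀ p : ℤ → Prop, ∀ _ : DecidablePred p,
        T.filter p = X.filter p ∪ Y.filter p := by
      intro p _
      rw [← hU, Finset.filter_union]
    have key : ∀ i : Fin N,
        (∏ u ∈ Finset.Ico (0 : ℤ) (x i), f (x i, u)) *
          (∏ u ∈ Finset.Ioc (x i) ((S : ℤ) + N - 1), f (u, x i))
        = (-1 : ℂ)^((T.filter (fun u => u < x i)).card + (T.filter (fun u => x i < u)).card) *
          ((∏ u ∈ X with u < x i, f (u, x i)) * (∏ u ∈ Y with u < x i, f (u, x i)) *
           ((∏ u ∈ X with x i < u, f (x i, u)) * (∏ u ∈ Y with x i < u, f (x i, u)))) := by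
      intro i
      rw [hIco i, hIoc i, flipB f hanti (x i) (T.filter (fun u => x i < u)),
        flipA f hanti (x i) (T.filter (fun u => u < x i))]
      rw [hfil (fun u => u < x i), hfil (fun u => x i < u),
        Finset.prod_union (Finset.disjoint_filter_filter hXY),
        Finset.prod_union (Finset.disjoint_filter_filter hXY),
        Finset.card_union_of_disjoint (Finset.disjoint_filter_filter hXY),
        Finset.card_union_of_disjoint (Finset.disjoint_filter_filter hXY), pow_add]
      ring
    refine ⟨∑ i : Fin N,
      ((T.filter (fun u => u < x i)).card + (T.filter (fun u => x i < u)).card), ?_⟩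
    rw [hDdef, Finset.prod_congr rfl (fun i _ => key i), Finset.prod_mul_distrib,
      Finset.prod_pow_eq_pow_sum]
    congr 1
    simp only [Finset.prod_mul_distrib]
    have hQ1 : (∏ i : Fin N, ∏ u ∈ X with u < x i, f (u, x i)) = PXX := by
      rw [hPXX, swapP, hXdef, Finset.prod_image (fun a _ b _ h => hx.injective h)]
    have hQ2 : (∏ i : Fin N, ∏ u ∈ Y with u < x i, f (u, x i)) = PYX := by
      rw [hPYX, swapP, hXdef, Finset.prod_image (fun a _ b _ h => hx.injective h)]
    have hQ3 : (∏ i : Fin N, ∏ u ∈ X with x i < u, f (x i, u)) = PXX := by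
      rw [hPXX, hXdef, Finset.prod_image (fun a _ b _ h => hx.injective h)]
    have hQ4 : (∏ i : Fin N, ∏ u ∈ Y with x i < u, f (x i, u)) = PXY := by
      rw [hPXY, hXdef, Finset.prod_image (fun a _ b _ h => hx.injective h)]
    rw [hQ1, hQ2, hQ3, hQ4]
    ring
  have hDne : D ≠ 0 := by
    rw [hDdef]
    rw [Finset.prod_ne_zero_iff]
    intro i _
    apply mul_ne_zero
    · rw [Finset.prod_ne_zero_iff]
      intro u hu
      rw [Finset.mem_Ico] at hu
      exact (hden i u).1 hu
    · rw [Finset.prod_ne_zero_iff]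
      intro u hu
      rw [Finset.mem_Ioc] at hu
      exact (hden i u).2 ⟨hu.1, by omega⟩
  obtain ⟨K, hDK⟩ := hD
  refine ⟨(-1 : ℂ)^K, ?_, ?_⟩
  · rcases Nat.even_or_odd K with h | h
    · exact Or.inl h.neg_one_pow
    · exact Or.inr h.neg_one_pow
  · rw [indexedP y hy (fun u v => f (u, v)), indexedP x hx (fun u v => f (u, v)), hfull]
    rw [hsplit]
    have e1 : (∏ u ∈ Finset.image y Finset.univ,
        ∏ v ∈ (Finset.image y Finset.univ) with u < v, f (u, v)) = PYY := rfl
    have e2 : (∏ u ∈ Finset.image x Finset.univ,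
        ∏ v ∈ (Finset.image x Finset.univ) with u < v, f (u, v)) = PXX := rfl
    rw [e1, e2, eq_mul_inv_iff_mul_eq₀ hDne, hDK]
    ring
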